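/- arXiv:1805.03732 — 5 statements merged into one kernel-verified Lean document; each statement's English description precedes it below -/
import Mathlib

section
/- Let φ : M → 2^G be a filter on a group G, let I = {s ∈ M : φ_s = H} for a fixed subgroup H ∈ im(φ), and let J ⊆ I contain all minimal elements of I with (M − I) ∪ J generating M. Define, for s ∈ M, ν_s = ∏_{(r₁,…,r_k)} [φ_{r₁},…,φ_{r_k}], the product over all partitions of s into parts from (M − I) ∪ J. Then for all s, t ∈ M, [ν_s, ν_t] ≤ ν_{s+t}. -/
/-- The left-normed iterated commutator subgroup `[φ_{r₁}, φ_{r₂}, …, φ_{r_k}]`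
associated to a tuple `(r₁, …, r_k)` of indices. -/
def listComm {G M : Type*} [Group G] (φ : M → Subgroup G) : List M → Subgroup G
  | [] => ⊤
  | r :: rs => rs.foldl (fun H t => ⁅H, φ t⁆) (φ r)

/-- `ν_s = ∏ [φ_{r₁},…,φ_{r_k}]`, the product over all partitions of `s`
into parts from the allowed set. -/
def nuSub {G M : Type*} [Group G] [AddCommMonoid M]
    (φ : M → Subgroup G) (allowed : Set M) (s : M) : Subgroup G :=
  sSup {K : Subgroup G | ∃ l : List M, l ≠ [] ∧ (∀ r ∈ l, r ∈ allowed) ∧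
    l.sum = s ∧ K = listComm φ l}

namespace NuAux

open Subgroup
open scoped commutatorElement


variable {G M : Type*} [Group G]

/-- sSup of normal subgroups is normal. -/
lemma sSup_normal (S : Set (Subgroup G)) (h : ∀ K ∈ S, K.Normal) : (sSup S).Normal := by
  constructor
  intro n hn g
  have : sSup S ≤ Subgroup.comap (MulAut.conj g).toMonoidHom (sSup S) := by
    refine sSup_le fun K hK => fun x hx => ?_
    have : g * x * g⁻¹ ∈ K := (h K hK).conj_mem x hx g
    exact le_sSup hK this
  exact this hn

lemma commutator_sSup_left (S : Set (Subgroup G)) (K L : Subgroup G) [hL : L.Normal]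
    (h : ∀ A ∈ S, ⁅A, K⁆ ≤ L) : ⁅sSup S, K⁆ ≤ L := by
  rw [Subgroup.commutator_le]
  intro g₁ hg₁ g₂ hg₂
  rw [sSup_eq_iSup', iSup_eq_closure] at hg₁
  induction hg₁ using closure_induction with
  | mem x hx =>
      obtain ⟨_, ⟨⟨A, hA⟩, rfl⟩, hxA⟩ := hx
      exact (Subgroup.commutator_le.mp (h A hA)) x hxA g₂ hg₂
  | one => simpa using L.one_mem
  | mul a b _ _ ha hb =>
      have : ⁅a * b, g₂⁆ = (a * ⁅b, g₂⁆ * a⁻¹) * ⁅a, g₂⁆ := by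
        simp only [commutatorElement_def]; group
      rw [this]
      exact L.mul_mem (hL.conj_mem _ hb a) ha
  | inv a _ ha =>
      have : ⁅a⁻¹, g₂⁆ = a⁻¹ * ⁅a, g₂⁆⁻¹ * a := by
        simp only [commutatorElement_def]; group
      rw [this]
      have := hL.conj_mem _ (L.inv_mem ha) a⁻¹
      simpa using this

/-- Three subgroups lemma, sup form, for normal subgroups. -/
lemma three_subgroups (A B C : Subgroup G) [A.Normal] [B.Normal] [C.Normal] :
    ⁅⁅A, B⁆, C⁆ ≤ ⁅⁅B, C⁆, A⁆ ⊔ ⁅⁅C, A⁆, B⁆ := by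
  set N : Subgroup G := ⁅⁅B, C⁆, A⁆ ⊔ ⁅⁅C, A⁆, B⁆ with hN
  have hNnorm : N.Normal := Subgroup.sup_normal _ _
  let π := QuotientGroup.mk' N
  have hker : π.ker = N := QuotientGroup.ker_mk' N
  have hsurj : Function.Surjective π := QuotientGroup.mk'_surjective N
  have h1 : ⁅⁅B.map π, C.map π⁆, A.map π⁆ = ⊥ := by
    rw [← Subgroup.map_commutator, ← Subgroup.map_commutator, Subgroup.map_eq_bot_iff, hker]
    exact le_sup_left
  have h2 : ⁅⁅C.map π, A.map π⁆, B.map π⁆ = ⊥ := by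
    rw [← Subgroup.map_commutator, ← Subgroup.map_commutator, Subgroup.map_eq_bot_iff, hker]
    exact le_sup_right
  have h3 := Subgroup.commutator_commutator_eq_bot_of_rotate h1 h2
  rw [← Subgroup.map_commutator, ← Subgroup.map_commutator, Subgroup.map_eq_bot_iff, hker] at h3
  exact h3

lemma listComm_append_singleton (φ : M → Subgroup G) (a : List M) (ha : a ≠ []) (r : M) :
    listComm φ (a ++ [r]) = ⁅listComm φ a, φ r⁆ := by
  obtain ⟨x, xs, rfl⟩ := List.exists_cons_of_ne_nil ha
  simp [listComm, List.foldl_append]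

lemma foldl_comm_normal (φ : M → Subgroup G) (hnorm : ∀ s : M, (φ s).Normal) :
    ∀ (rs : List M) (H : Subgroup G), H.Normal →
      (rs.foldl (fun H t => ⁅H, φ t⁆) H).Normal := by
  intro rs
  induction rs with
  | nil => intro H hH; exact hH
  | cons t ts ih =>
      intro H hH
      haveI := hH
      haveI := hnorm t
      exact ih ⁅H, φ t⁆ (Subgroup.commutator_normal _ _)

lemma listComm_normal (φ : M → Subgroup G) (hnorm : ∀ s : M, (φ s).Normal) (l : List M) :
    (listComm φ l).Normal := by
  match l with
  | [] => show (⊤ : Subgroup G).Normal; infer_instance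
  | r :: rs => exact foldl_comm_normal φ hnorm rs (φ r) (hnorm r)

variable [AddCommMonoid M]

lemma nuSub_normal (φ : M → Subgroup G) (hnorm : ∀ s : M, (φ s).Normal)
    (allowed : Set M) (s : M) : (nuSub φ allowed s).Normal := by
  apply sSup_normal
  rintro K ⟨l, hl, hlall, hlsum, rfl⟩
  exact listComm_normal φ hnorm l

lemma key_base (φ : M → Subgroup G) (hnorm : ∀ s : M, (φ s).Normal)
    (allowed : Set M) (s r : M) (hr : r ∈ allowed) :
    ⁅nuSub φ allowed s, φ r⁆ ≤ nuSub φ allowed (s + r) := by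
  haveI := nuSub_normal φ hnorm allowed (s + r)
  apply commutator_sSup_left
  rintro A ⟨l, hl, hlall, hlsum, rfl⟩
  rw [← listComm_append_singleton φ l hl r]
  apply le_sSup
  refine ⟨l ++ [r], by simp, ?_, by simp [hlsum], rfl⟩
  intro x hx
  rcases List.mem_append.mp hx with h | h
  · exact hlall x h
  · simp at h; subst h; exact hr

lemma key (φ : M → Subgroup G) (hnorm : ∀ s : M, (φ s).Normal)
    (allowed : Set M) :
    ∀ (b : List M), b ≠ [] → (∀ r ∈ b, r ∈ allowed) → ∀ s : M,
      ⁅nuSub φ allowed s, listComm φ b⁆ ≤ nuSub φ allowed (s + b.sum) := by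
  intro b
  induction b using List.reverseRecOn with
  | nil => intro h; exact absurd rfl h
  | append_singleton b' r ih =>
    intro _ hall s
    have hr : r ∈ allowed := hall r (by simp)
    by_cases hb' : b' = []
    · subst hb'
      have h1 : listComm φ ([] ++ [r]) = φ r := rfl
      have h2 : (([] : List M) ++ [r]).sum = r := by simp
      rw [h1, h2]
      exact key_base φ hnorm allowed s r hr
    · have hall' : ∀ x ∈ b', x ∈ allowed := fun x hx => hall x (List.mem_append_left _ hx)
      rw [listComm_append_singleton φ b' hb' r]
      haveI hA : (nuSub φ allowed s).Normal := nuSub_normal φ hnorm allowed s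
      haveI hB : (listComm φ b').Normal := listComm_normal φ hnorm b'
      haveI hR : (φ r).Normal := hnorm r
      rw [Subgroup.commutator_comm]
      refine (three_subgroups (listComm φ b') (φ r) (nuSub φ allowed s)).trans (sup_le ?_ ?_)
      · calc ⁅⁅φ r, nuSub φ allowed s⁆, listComm φ b'⁆
            = ⁅⁅nuSub φ allowed s, φ r⁆, listComm φ b'⁆ := by
              rw [Subgroup.commutator_comm (φ r)]
          _ ≤ ⁅nuSub φ allowed (s + r), listComm φ b'⁆ :=
              Subgroup.commutator_mono (key_base φ hnorm allowed s r hr) le_rfl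
          _ ≤ nuSub φ allowed (s + r + b'.sum) := ih hb' hall' (s + r)
          _ = nuSub φ allowed (s + (b' ++ [r]).sum) := by
              congr 1; rw [List.sum_append]; simp; abel
      · calc ⁅⁅nuSub φ allowed s, listComm φ b'⁆, φ r⁆
            ≤ ⁅nuSub φ allowed (s + b'.sum), φ r⁆ :=
              Subgroup.commutator_mono (ih hb' hall' s) le_rfl
          _ ≤ nuSub φ allowed (s + b'.sum + r) := key_base φ hnorm allowed _ r hr
          _ = nuSub φ allowed (s + (b' ++ [r]).sum) := by
              congr 1; rw [List.sum_append]; simp; abel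

end NuAux

/-- with `I = {s : φ_s = H₀}` and `J ⊆ I` containing all minimal
elements of `I`, such that `(M − I) ∪ J` generates `M`, the subgroups
`ν_s` (products of iterated commutators over restricted partitions) satisfy
`[ν_s, ν_t] ≤ ν_{s+t}`. -/
theorem nu_commutator_le {G M : Type*} [Group G] [AddCommMonoid M] [Preorder M]
    (hadd : ∀ s t s' t' : M, s ≤ t → s' ≤ t' → s + s' ≤ t + t')
    (hmin : ∀ s : M, 0 ≤ s)
    (φ : M → Subgroup G)
    (hnorm : ∀ s : M, (φ s).Normal)
    (hcomm : ∀ s t : M, ⁅φ s, φ t⁆ ≤ φ (s + t))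
    (hanti : ∀ s t : M, s ≤ t → φ t ≤ φ s)
    (H0 : Subgroup G) (hH0 : H0 ∈ Set.range φ)
    (I J : Set M)
    (hI : I = {s : M | φ s = H0})
    (hJI : J ⊆ I)
    (hJmin : ∀ s ∈ I, (∀ t ∈ I, ¬ t < s) → s ∈ J)
    (hgen : ∀ m : M, ∃ l : List M, (∀ r ∈ l, r ∈ (Set.univ \ I) ∪ J) ∧ l.sum = m) :
    ∀ s t : M,
      ⁅nuSub φ ((Set.univ \ I) ∪ J) s, nuSub φ ((Set.univ \ I) ∪ J) t⁆ ≤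
        nuSub φ ((Set.univ \ I) ∪ J) (s + t) := by
  intro s t
  set allowed : Set M := (Set.univ \ I) ∪ J with hallowed
  haveI := NuAux.nuSub_normal φ hnorm allowed (s + t)
  haveI := NuAux.nuSub_normal φ hnorm allowed s
  rw [Subgroup.commutator_comm]
  apply NuAux.commutator_sSup_left
  rintro A ⟨b, hb, hball, hbsum, rfl⟩
  rw [Subgroup.commutator_comm]
  exact (NuAux.key φ hnorm allowed b hb hball s).trans (le_of_eq (by rw [hbsum]))
end

section
/- Let M be a cyclic commutative monoid on which the algebraic order (s ⪯₊ t iff ∃u, s+u = t) is a partial order (antisymmetric). Then M is isomorphic to ℕ or to C_{r,1} for some r ∈ ℕ (i.e., the cyclic monoid of index r and period 1). -/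
/-- The congruence relation defining the cyclic monoid `C_{r,s}`:
`i ∼ j` iff `i = j` when `i, j < r`, and `i ≡ j (mod s)` when `i, j ≥ r`. -/
def cyclicRel (r s : ℕ) (i j : ℕ) : Prop :=
  (i < r ∧ j < r ∧ i = j) ∨ (r ≤ i ∧ r ≤ j ∧ i % s = j % s)

/-- The cyclic monoid `C_{r,s} = ℕ/∼` of index `r` and period `s`. -/
abbrev Crs (r s : ℕ) := (addConGen (cyclicRel r s)).Quotient

/-- a cyclic commutative monoid whose algebraic order
(`a ⪯₊ b` iff `∃ u, a + u = b`) is antisymmetric (hence a partial order)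
is isomorphic to `ℕ` or to `C_{r,1}` for some `r ∈ ℕ`. -/
theorem cyclic_monoid_algebraic_order_classification {M : Type*} [AddCommMonoid M]
    (g : M) (hg : ∀ x : M, ∃ n : ℕ, n • g = x)
    (hantisymm : ∀ a b : M, (∃ u : M, a + u = b) → (∃ v : M, b + v = a) → a = b) :
    Nonempty (M ≃+ ℕ) ∨ ∃ r : ℕ, Nonempty (M ≃+ Crs r 1) := by
  classical
  have key : ∀ i j : ℕ, i < j → i • g = j • g → ∀ a, i ≤ a → a • g = i • g := by
    intro i j hij heq
    set k := j - i with hk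
    have hk1 : 1 ≤ k := by omega
    have step : ∀ a, i ≤ a → a • g = (a + k) • g := by
      intro a ha
      have h1 : a • g = (a - i) • g + i • g := by
        rw [← add_nsmul]; congr 1; omega
      rw [h1, heq, ← add_nsmul]
      congr 1; omega
    have iter : ∀ t a, i ≤ a → a • g = (a + t * k) • g := by
      intro t
      induction t with
      | zero => intro a _; simp
      | succ n ih =>
        intro a ha
        rw [step a ha, ih (a + k) (by omega)]
        congr 1; ring
    intro a ha
    apply hantisymm
    · refine ⟨(i + a * k - a) • g, ?_⟩
      rw [← add_nsmul]
      have hle : a ≤ i + a * k := by nlinarith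
      rw [show a + (i + a * k - a) = i + a * k by omega]
      exact (iter a i le_rfl).symm
    · exact ⟨(a - i) • g, by rw [← add_nsmul]; congr 1; omega⟩
  set f : ℕ →+ M := multiplesHom M g with hf
  have hfval : ∀ n : ℕ, f n = n • g := fun n => rfl
  by_cases hcol : ∃ n : ℕ, n • g = (n + 1) • g
  · right
    set r := Nat.find hcol with hr
    have hrr : r • g = (r + 1) • g := Nat.find_spec hcol
    have hmin : ∀ m < r, ¬ m • g = (m + 1) • g := fun m hm => Nat.find_min hcol hm
    have collapse : ∀ a, r ≤ a → a • g = r • g :=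
      key r (r + 1) (by omega) hrr
    have injbelow : ∀ i j : ℕ, i < r → j < r → i • g = j • g → i = j := by
      intro i j hi hj hij
      by_contra hne
      rcases Nat.lt_or_ge i j with h | h
      · exact hmin i hi ((key i j h hij (i + 1) (by omega)).symm)
      · have h' : j < i := by omega
        exact hmin j hj ((key j i h' hij.symm (j + 1) (by omega)).symm)
    have cross : ∀ i j : ℕ, i < r → r ≤ j → i • g ≠ j • g := by
      intro i j hi hj hij
      have : i • g = r • g := by rw [hij, collapse j hj]
      exact hmin i hi ((key i r hi this (i + 1) (by omega)).symm)
    set c := addConGen (cyclicRel r 1) with hc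
    have hle : ∀ i j, cyclicRel r 1 i j → f i = f j := by
      intro i j hij
      rcases hij with ⟨_, _, rfl⟩ | ⟨hi, hj, _⟩
      · rfl
      · show i • g = j • g
        rw [collapse i hi, collapse j hj]
    have hle' : c ≤ AddCon.ker f := AddCon.addConGen_le.mpr (fun i j h => hle i j h)
    set φ : Crs r 1 →+ M := AddCon.lift c f hle' with hφ
    have hφval : ∀ n : ℕ, φ (n : Crs r 1) = n • g := fun n => rfl
    have hsurj : Function.Surjective φ := by
      intro x
      obtain ⟨n, hn⟩ := hg x
      exact ⟨(n : Crs r 1), hn⟩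
    have hinj : Function.Injective φ := by
      intro a b
      induction a using AddCon.induction_on with
      | H n =>
      induction b using AddCon.induction_on with
      | H m =>
      intro h
      have h' : n • g = m • g := h
      apply (AddCon.eq c).mpr
      rcases Nat.lt_or_ge n r with hn | hn
      · rcases Nat.lt_or_ge m r with hm | hm
        · have := injbelow n m hn hm h'
          subst this
          exact c.refl n
        · exact absurd h' (cross n m hn hm)
      · rcases Nat.lt_or_ge m r with hm | hm
        · exact absurd h'.symm (cross m n hm hn)
        · exact AddConGen.Rel.of _ _ (Or.inr ⟨hn, hm, by omega⟩)
    exact ⟨r, ⟨(AddEquiv.ofBijective φ ⟨hinj, hsurj⟩).symm⟩⟩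
  · left
    push_neg at hcol
    have hinj : Function.Injective f := by
      intro a b h
      have h' : a • g = b • g := h
      by_contra hne
      rcases Nat.lt_or_ge a b with hab | hab
      · exact hcol a ((key a b hab h' (a + 1) (by omega)).symm)
      · have hab' : b < a := by omega
        exact hcol b ((key b a hab' h'.symm (b + 1) (by omega)).symm)
    have hsurj : Function.Surjective f := hg
    exact ⟨(AddEquiv.ofBijective f ⟨hinj, hsurj⟩).symm⟩
end

section
/- A group is polycyclic if and only if it is solvable and every subgroup is finitely generated. -/
/-- A group is polycyclic if it has a finite subnormal series with cyclic
factors: `G = G₁ ≥ G₂ ≥ ⋯ ≥ G_{n+1} = 1` where each `G_{i+1}` is normal in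
`G_i` and each factor `G_i/G_{i+1}` is cyclic (generated by one coset). -/
def IsPolycyclic (G : Type*) [Group G] : Prop :=
  ∃ (n : ℕ) (c : ℕ → Subgroup G),
    c 0 = ⊤ ∧ c n = ⊥ ∧
    (∀ i < n, c (i + 1) ≤ c i) ∧
    (∀ i < n, ∀ x ∈ c i, ∀ y ∈ c (i + 1), x * y * x⁻¹ ∈ c (i + 1)) ∧
    (∀ i < n, ∃ g ∈ c i, ∀ x ∈ c i, ∃ k : ℤ, (g ^ k)⁻¹ * x ∈ c (i + 1))

open Subgroup


private lemma step_lemma {G : Type*} [Group G] (A B : Subgroup G) (hBA : B ≤ A)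
    (hconj : ∀ x ∈ A, ∀ y ∈ B, x * y * x⁻¹ ∈ B)
    (g : G) (hg : g ∈ A) (hgen : ∀ x ∈ A, ∃ k : ℤ, (g ^ k)⁻¹ * x ∈ B) :
    (∀ x ∈ A, ∀ y ∈ A, x * y * x⁻¹ * y⁻¹ ∈ B) ∧
    (∀ H : Subgroup G, (H ⊓ B).FG → (H ⊓ A).FG) := by
  set N : Subgroup A := B.subgroupOf A with hN
  haveI : N.Normal := by
    constructor
    intro n hn x
    rw [hN, Subgroup.mem_subgroupOf] at hn ⊢
    exact hconj x x.2 n hn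
  set φ : ↥A →* ↥A ⧸ N := QuotientGroup.mk' N with hφ
  have hker : ∀ a : ↥A, φ a = 1 ↔ (a : G) ∈ B := by
    intro a
    rw [hφ, ← MonoidHom.mem_ker, QuotientGroup.ker_mk', hN]
    exact Subgroup.mem_subgroupOf
  have heq : ∀ a b : ↥A, φ a = φ b ↔ ((a⁻¹ * b : ↥A) : G) ∈ B := by
    intro a b
    rw [← hker (a⁻¹ * b)]
    constructor
    · intro h; rw [map_mul, map_inv, h, inv_mul_cancel]
    · intro h
      have h2 : φ a * φ (a⁻¹ * b) = φ a := by rw [h, mul_one]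
      rw [← map_mul, mul_inv_cancel_left] at h2
      exact h2.symm
  set u : ↥A ⧸ N := φ ⟨g, hg⟩ with hu
  have hpow : ∀ (a : ↥A) (k : ℤ), (g ^ k)⁻¹ * (a : G) ∈ B → φ a = u ^ k := by
    intro a k hk
    rw [hu, ← map_zpow]
    refine ((heq (⟨g, hg⟩ ^ k) a).mpr ?_).symm
    simpa using hk
  constructor
  · intro x hx y hy
    obtain ⟨k, hk⟩ := hgen x hx
    obtain ⟨l, hl⟩ := hgen y hy
    have h1 : φ (⟨x, hx⟩ * ⟨y, hy⟩ * ⟨x, hx⟩⁻¹ * ⟨y, hy⟩⁻¹ : ↥A) = 1 := by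
      rw [map_mul, map_mul, map_mul, map_inv, map_inv,
        hpow ⟨x, hx⟩ k hk, hpow ⟨y, hy⟩ l hl, ← zpow_neg, ← zpow_neg,
        ← zpow_add, ← zpow_add, ← zpow_add]
      norm_num
    exact (hker _).mp h1
  · intro H hFG
    obtain ⟨T, hT⟩ := hFG
    set H' : Subgroup ↥A := (H ⊓ A).subgroupOf A with hH'
    haveI : IsCyclic (↥A ⧸ N) := by
      constructor
      refine ⟨u, fun q => ?_⟩
      obtain ⟨a, rfl⟩ := QuotientGroup.mk'_surjective N q
      obtain ⟨k, hk⟩ := hgen a a.2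
      exact ⟨k, (hpow a k hk).symm⟩
    haveI : IsCyclic ↥(H'.map φ) := Subgroup.isCyclic _
    obtain ⟨σ, hσ⟩ := IsCyclic.exists_generator (α := ↥(H'.map φ))
    obtain ⟨a, haH', haφ⟩ := σ.2
    have haHA : (a : G) ∈ H ⊓ A := haH'
    haveI : DecidableEq G := Classical.decEq G
    refine ⟨insert (a : G) T, le_antisymm ?_ ?_⟩
    · rw [Finset.coe_insert, closure_le]
      intro z hz
      rcases hz with rfl | hz
      · exact haHA
      · exact inf_le_inf_left H hBA (hT ▸ Subgroup.subset_closure hz)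
    · intro x hx
      have hx' : (⟨x, hx.2⟩ : ↥A) ∈ H' := by rw [hH', Subgroup.mem_subgroupOf]; exact hx
      obtain ⟨t, ht⟩ := Subgroup.mem_zpowers_iff.mp (hσ ⟨φ ⟨x, hx.2⟩, Subgroup.mem_map_of_mem φ hx'⟩)
      have ht' : φ (a ^ t) = φ ⟨x, hx.2⟩ := by
        rw [map_zpow]
        have := congrArg (Subtype.val) ht
        push_cast at this
        rw [← haφ] at this
        exact this
      have hmem : ((a : G) ^ t)⁻¹ * x ∈ B := by
        have := (heq (a ^ t) ⟨x, hx.2⟩).mp ht'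
        simpa using this
      have hmemH : ((a : G) ^ t)⁻¹ * x ∈ H :=
        H.mul_mem (H.inv_mem (H.zpow_mem haHA.1 t)) hx.1
      have : x = (a : G) ^ t * (((a : G) ^ t)⁻¹ * x) := by group
      rw [this]
      refine Subgroup.mul_mem _ (Subgroup.zpow_mem _ (Subgroup.subset_closure ?_) t) ?_
      · exact Finset.mem_coe.mpr (Finset.mem_insert_self _ _)
      · have : ((a : G) ^ t)⁻¹ * x ∈ H ⊓ B := ⟨hmemH, hmem⟩
        rw [← hT] at this
        exact Subgroup.closure_mono (by intro z hz; exact Finset.mem_coe.mpr (Finset.mem_insert_of_mem hz)) this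


private lemma fg_of_map_fg {G : Type*} [Group G] (N : Subgroup G) (K : Subgroup ↥N)
    (h : (K.map N.subtype).FG) : K.FG := by
  rw [Subgroup.fg_iff] at h ⊢
  obtain ⟨S, hS, hfin⟩ := h
  refine ⟨N.subtype ⁻¹' S, ?_, hfin.preimage (N.subtype_injective.injOn)⟩
  apply Subgroup.map_injective N.subtype_injective
  rw [MonoidHom.map_closure, Set.image_preimage_eq_of_subset, hS]
  intro x hx
  have : x ∈ K.map N.subtype := hS ▸ Subgroup.subset_closure hx
  obtain ⟨y, _, rfl⟩ := this
  exact ⟨y, rfl⟩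

private lemma map_derivedSeries' {G : Type*} [Group G] :
    ∀ k, (derivedSeries ↥(commutator G) k).map (commutator G).subtype = derivedSeries G (k + 1)
  | 0 => by
    rw [derivedSeries_zero, ← MonoidHom.range_eq_map, Subgroup.range_subtype, zero_add,
      derivedSeries_one]
  | (k + 1) => by
    rw [derivedSeries_succ, Subgroup.map_commutator, map_derivedSeries' k, ← derivedSeries_succ]

open scoped commutatorElement in
private lemma normal_of_commutator_le' {G : Type*} [Group G] {H : Subgroup G}
    (h : commutator G ≤ H) : H.Normal := by
  constructor
  intro x hx gg
  have hc : ⁅gg, x⁆ ∈ commutator G :=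
    Subgroup.commutator_mem_commutator (Subgroup.mem_top _) (Subgroup.mem_top _)
  have heq : gg * x * gg⁻¹ = ⁅gg, x⁆ * x := by
    rw [commutatorElement_def]; group
  rw [heq]
  exact H.mul_mem (h hc) hx

private lemma mem_sup_zpowers {G : Type*} [Group G] {K : Subgroup G} [K.Normal]
    (g : G) {x : G} (hx : x ∈ K ⊔ Subgroup.zpowers g) : ∃ k : ℤ, (g ^ k)⁻¹ * x ∈ K := by
  set π := QuotientGroup.mk' K with hπ
  have h1 : π x ∈ (K ⊔ Subgroup.zpowers g).map π := Subgroup.mem_map_of_mem π hx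
  rw [Subgroup.map_sup, (Subgroup.map_eq_bot_iff K).mpr (by rw [hπ, QuotientGroup.ker_mk']),
    bot_sup_eq, MonoidHom.map_zpowers] at h1
  obtain ⟨k, hk⟩ := Subgroup.mem_zpowers_iff.mp h1
  refine ⟨k, ?_⟩
  have h2 : π ((g ^ k)⁻¹ * x) = 1 := by
    rw [map_mul, map_inv, map_zpow, hk, inv_mul_cancel]
  rw [← MonoidHom.mem_ker, hπ, QuotientGroup.ker_mk'] at h2
  exact h2

universe u

private lemma polyAux : ∀ (d : ℕ) (G : Type u) [Group G], derivedSeries G d = ⊥ →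
    (∀ H : Subgroup G, H.FG) → IsPolycyclic G := by
  intro d
  induction d with
  | zero =>
    intro G _ hd _
    rw [derivedSeries_zero] at hd
    exact ⟨0, fun _ => ⊤, rfl, hd, fun i hi => absurd hi (Nat.not_lt_zero i),
      fun i hi => absurd hi (Nat.not_lt_zero i), fun i hi => absurd hi (Nat.not_lt_zero i)⟩
  | succ d ih =>
    intro G _ hd hFG
    set N := commutator G with hNdef
    have hNd : derivedSeries ↥N d = ⊥ :=
      (Subgroup.map_eq_bot_iff_of_injective _ N.subtype_injective).mp
        ((map_derivedSeries' d).trans hd)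
    obtain ⟨m', d', hd0, hdm, hdle, hdconj, hdcyc⟩ :=
      ih ↥N hNd (fun K => fg_of_map_fg N K (hFG _))
    obtain ⟨S, hS⟩ := hFG ⊤
    set L := S.toList with hL
    set m := L.length with hm
    set T : ℕ → Subgroup G := fun i => N ⊔ Subgroup.closure {x | x ∈ L.drop i} with hT
    have hTnormal : ∀ i, (T i).Normal := fun i => normal_of_commutator_le' le_sup_left
    have hT0 : T 0 = ⊤ := by
      have hset : {x | x ∈ L.drop 0} = (S : Set G) := by
        ext x; simp [hL]
      simp only [hT, hset, hS, sup_top_eq]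
    have hTm : T m = N := by
      simp only [hT, hm, List.drop_length]
      simp
    have hTle : ∀ i, T (i + 1) ≤ T i := by
      intro i
      simp only [hT]
      refine sup_le_sup_left (Subgroup.closure_mono ?_) N
      intro x hx
      exact List.drop_subset_drop_left L (Nat.le_succ i) hx
    have hTsup : ∀ i, ∀ hi : i < m, T i = T (i + 1) ⊔ Subgroup.zpowers (L[i]'hi) := by
      intro i hi
      have hset : {x | x ∈ L.drop i} = insert (L[i]'hi) {x | x ∈ L.drop (i + 1)} := by
        ext x
        simp only [Set.mem_setOf_eq, Set.mem_insert_iff]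
        rw [List.drop_eq_getElem_cons hi]
        exact List.mem_cons
      simp only [hT, hset]
      rw [Set.insert_eq, Subgroup.closure_union, ← Subgroup.zpowers_eq_closure,
        sup_comm (Subgroup.zpowers _) _, ← sup_assoc]
    set c : ℕ → Subgroup G := fun i => if i < m then T i else (d' (i - m)).map N.subtype with hc
    have hc_ge : ∀ i, m ≤ i → c i = (d' (i - m)).map N.subtype := by
      intro i hi
      have hni : ¬ i < m := Nat.not_lt.mpr hi
      simp only [hc]
      rw [if_neg hni]
    have hc_le : ∀ i, i ≤ m → c i = T i := by
      intro i hi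
      rcases lt_or_eq_of_le hi with h | rfl
      · simp only [hc]; rw [if_pos h]
      · rw [hc_ge m le_rfl, Nat.sub_self, hd0, ← MonoidHom.range_eq_map,
          Subgroup.range_subtype, hTm]
    refine ⟨m + m', c, ?_, ?_, ?_, ?_, ?_⟩
    · rw [hc_le 0 (Nat.zero_le m), hT0]
    · rw [hc_ge (m + m') (Nat.le_add_right m m'), Nat.add_sub_cancel_left, hdm, Subgroup.map_bot]
    · intro i hi
      by_cases him : i < m
      · rw [hc_le (i + 1) him, hc_le i him.le]
        exact hTle i
      · have hmi : m ≤ i := Nat.le_of_not_lt him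
        have hj : i - m < m' := by omega
        rw [hc_ge i hmi, hc_ge (i + 1) (by omega), show i + 1 - m = (i - m) + 1 by omega]
        exact Subgroup.map_mono (hdle (i - m) hj)
    · intro i hi
      by_cases him : i < m
      · rw [hc_le (i + 1) him, hc_le i him.le]
        intro x _ y hy
        exact (hTnormal (i + 1)).conj_mem y hy x
      · have hmi : m ≤ i := Nat.le_of_not_lt him
        have hj : i - m < m' := by omega
        rw [hc_ge i hmi, hc_ge (i + 1) (by omega), show i + 1 - m = (i - m) + 1 by omega]
        rintro x ⟨a, ha, rfl⟩ y ⟨b, hb, rfl⟩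
        exact ⟨a * b * a⁻¹, hdconj (i - m) hj a ha b hb, by simp⟩
    · intro i hi
      by_cases him : i < m
      · rw [hc_le (i + 1) him, hc_le i him.le]
        refine ⟨L[i]'him, ?_, ?_⟩
        · rw [hTsup i him]
          exact Subgroup.mem_sup_right (Subgroup.mem_zpowers _)
        · intro x hx
          haveI := hTnormal (i + 1)
          rw [hTsup i him] at hx
          exact mem_sup_zpowers _ hx
      · have hmi : m ≤ i := Nat.le_of_not_lt him
        have hj : i - m < m' := by omega
        rw [hc_ge i hmi, hc_ge (i + 1) (by omega), show i + 1 - m = (i - m) + 1 by omega]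
        obtain ⟨g', hg', hgen'⟩ := hdcyc (i - m) hj
        refine ⟨N.subtype g', ⟨g', hg', rfl⟩, ?_⟩
        rintro x ⟨a, ha, rfl⟩
        obtain ⟨k, hk⟩ := hgen' a ha
        exact ⟨k, ⟨(g' ^ k)⁻¹ * a, hk, by simp⟩⟩

/-- a group is polycyclic iff it is solvable and every
subgroup is finitely generated. -/
theorem polycyclic_iff_solvable_and_fg (G : Type*) [Group G] :
    IsPolycyclic G ↔ IsSolvable G ∧ ∀ H : Subgroup G, H.FG := by
  constructor
  · rintro ⟨n, c, hc0, hcn, hle, hconj, hcyc⟩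
    constructor
    · have key : ∀ i, i ≤ n → derivedSeries G i ≤ c i := by
        intro i
        induction i with
        | zero => intro _; rw [derivedSeries_zero, hc0]
        | succ i ihi =>
          intro hi
          have hi' : i < n := hi
          rw [derivedSeries_succ, Subgroup.commutator_le]
          intro x hx y hy
          obtain ⟨g, hg, hgen⟩ := hcyc i hi'
          have h2 := (step_lemma (c i) (c (i + 1)) (hle i hi') (hconj i hi') g hg hgen).1
            x (ihi hi'.le hx) y (ihi hi'.le hy)
          rw [commutatorElement_def]
          exact h2
      exact ⟨n, le_bot_iff.mp (hcn ▸ key n le_rfl)⟩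
    · intro H
      have key : ∀ j, j ≤ n → (H ⊓ c (n - j)).FG := by
        intro j
        induction j with
        | zero =>
          intro _
          rw [Nat.sub_zero, hcn, inf_bot_eq]
          exact ⟨∅, by simp⟩
        | succ j ihj =>
          intro hj
          have hlt : n - (j + 1) < n := by omega
          have heq : n - (j + 1) + 1 = n - j := by omega
          obtain ⟨g, hg, hgen⟩ := hcyc (n - (j + 1)) hlt
          refine (step_lemma (c (n - (j + 1))) (c (n - (j + 1) + 1)) (hle _ hlt)
            (hconj _ hlt) g hg hgen).2 H ?_
          rw [heq]
          exact ihj (by omega)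
      have hfin := key n le_rfl
      rw [Nat.sub_self, hc0, inf_top_eq] at hfin
      exact hfin
  · rintro ⟨hs, hfg⟩
    obtain ⟨d, hd⟩ := hs.solvable
    exact polyAux d G hd hfg
end

section
/- Let φ : M → 2^G be a filter with no inert subgroups and let 𝒴 be a graded basis for the associated graded abelian group L(φ) = ⊕_{s≠0} φ_s/∂φ_s. If X ⊆ G is a set of preimages of the elements of 𝒴 (one preimage per basis element), then for every s ∈ M with s ≠ 0, ⟨φ_s ∩ X⟩ = φ_s; in particular X is weakly-filtered by the boundary filter ∂φ. -/
/-- The boundary filter: `∂φ_s = ⟨φ_{s+t} : t ≠ 0⟩`. -/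
def boundaryFilter {G M : Type*} [Group G] [AddCommMonoid M]
    (φ : M → Subgroup G) (s : M) : Subgroup G :=
  ⨆ t ∈ {t : M | t ≠ 0}, φ (s + t)

/-- The ascending chain `𝔅₀ = {1}`,
`𝔅_{i+1} = 𝔅_i ∪ {φ_s : ∂φ_s = ⟨B⟩ for some B ⊆ 𝔅_i}`. -/
def BBn {G M : Type*} [Group G] [AddCommMonoid M] (φ : M → Subgroup G) :
    ℕ → Set (Subgroup G)
  | 0 => {⊥}
  | n + 1 => BBn φ n ∪
      {H | ∃ s : M, φ s = H ∧ ∃ B : Set (Subgroup G), B ⊆ BBn φ n ∧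
        boundaryFilter φ s = sSup B}

/-- `𝔅`: `φ` has no inert subgroups when all of `im(φ)` lies in `𝔅`. -/
def BBall {G M : Type*} [Group G] [AddCommMonoid M] (φ : M → Subgroup G) :
    Set (Subgroup G) :=
  {H | ∃ s : M, φ s = H ∧ ∃ B : Set (Subgroup G), B ⊆ (⋃ n : ℕ, BBn φ n) ∧
    boundaryFilter φ s = sSup B}

/-- if `φ` has no inert subgroups and `X ⊆ G` is a preimage of a
graded basis `𝒴` of `L(φ) = ⊕_{s≠0} φ_s/∂φ_s`, then `⟨φ_s ∩ X⟩ = φ_s` for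
every `s ≠ 0`; in particular `X` is weakly filtered by the boundary filter
`∂φ`. -/
theorem graded_basis_preimage_weakly_filtered {G M : Type*} [Group G]
    [AddCommMonoid M] [Preorder M]
    (hadd : ∀ s t s' t' : M, s ≤ t → s' ≤ t' → s + s' ≤ t + t')
    (hmin : ∀ s : M, 0 ≤ s)
    (φ : M → Subgroup G)
    (hnorm : ∀ s : M, (φ s).Normal)
    (hcomm : ∀ s t : M, ⁅φ s, φ t⁆ ≤ φ (s + t))
    (hanti : ∀ s t : M, s ≤ t → φ t ≤ φ s)
    (hnoinert : ∀ s : M, φ s ∈ BBall φ)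
    -- X is a preimage of a graded basis 𝒴 of L(φ): each x ∈ X lies over a
    -- unique homogeneous component, recorded by the degree function ω
    (X : Set G) (ω : G → M)
    (hω0 : ∀ x ∈ X, ω x ≠ 0)
    (hmem : ∀ x ∈ X, x ∈ φ (ω x) ∧ x ∉ boundaryFilter φ (ω x))
    -- the images of the degree-s elements of X span L_s(φ)
    (hspan : ∀ s : M, s ≠ 0 →
      φ s = Subgroup.closure {x : G | x ∈ X ∧ ω x = s} ⊔ boundaryFilter φ s)
    -- and are independent (a basis, one preimage per basis element)
    (hindep : ∀ x ∈ X,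
      x ∉ Subgroup.closure {y : G | y ∈ X ∧ ω y = ω x ∧ y ≠ x} ⊔ boundaryFilter φ (ω x)) :
    (∀ s : M, s ≠ 0 → Subgroup.closure ((φ s : Set G) ∩ X) = φ s) ∧
    (∀ s : M, Subgroup.closure ((boundaryFilter φ s : Set G) ∩ X) = boundaryFilter φ s) := by
  classical
  have hle : ∀ s t : M, t ≠ 0 → φ (s + t) ≤ boundaryFilter φ s := by
    intro s t ht
    exact le_iSup₂ (f := fun t (_ : t ∈ {t : M | t ≠ 0}) => φ (s + t)) t ht
  have hbf : ∀ s : M, boundaryFilter φ s ≤ φ s := by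
    intro s
    refine iSup₂_le fun t _ => hanti s (s + t) ?_
    have := hadd s s 0 t le_rfl (hmin t)
    simpa using this
  -- the key induction along the chain 𝔅ₙ
  have key : ∀ n : ℕ, ∀ K ∈ BBn φ n, ∀ s : M, s ≠ 0 → K ≤ φ s →
      K ≤ Subgroup.closure ((φ s : Set G) ∩ X) := by
    intro n
    induction n with
    | zero =>
      intro K hK s _ _
      simp only [BBn, Set.mem_singleton_iff] at hK
      subst hK
      exact bot_le
    | succ n ih =>
      intro K hK s hs hKs
      rcases hK with hK | ⟨s', hKs', B, hB, hbd⟩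
      · exact ih K hK s hs hKs
      · subst hKs'
        have hsSup : sSup B ≤ Subgroup.closure ((φ s : Set G) ∩ X) := by
          refine sSup_le fun K' hK' => ih K' (hB hK') s hs ?_
          calc K' ≤ sSup B := le_sSup hK'
            _ = boundaryFilter φ s' := hbd.symm
            _ ≤ φ s' := hbf s'
            _ ≤ φ s := hKs
        by_cases hs' : s' = 0
        · subst hs'
          have h1 : φ (0 : M) ≤ boundaryFilter φ 0 := by
            have := hle 0 s hs
            rw [zero_add] at this
            exact le_trans hKs this
          calc φ (0 : M) ≤ boundaryFilter φ 0 := h1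
            _ = sSup B := hbd
            _ ≤ _ := hsSup
        · rw [hspan s' hs']
          refine sup_le ?_ (hbd ▸ hsSup)
          refine (Subgroup.closure_le _).2 fun x hx => ?_
          refine Subgroup.subset_closure ⟨?_, hx.1⟩
          have := (hmem x hx.1).1
          rw [hx.2] at this
          exact hKs this
  have main : ∀ s : M, s ≠ 0 → Subgroup.closure ((φ s : Set G) ∩ X) = φ s := by
    intro s hs
    refine le_antisymm ((Subgroup.closure_le _).2 Set.inter_subset_left) ?_
    obtain ⟨s₂, hs₂, B, hB, hbd⟩ := hnoinert s
    have hsSup : sSup B ≤ Subgroup.closure ((φ s : Set G) ∩ X) := by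
      refine sSup_le fun K' hK' => ?_
      obtain ⟨_, ⟨n, rfl⟩, hKn⟩ := hB hK'
      refine key n K' hKn s hs ?_
      calc K' ≤ sSup B := le_sSup hK'
        _ = boundaryFilter φ s₂ := hbd.symm
        _ ≤ φ s₂ := hbf s₂
        _ = φ s := hs₂
    by_cases h2 : s₂ = 0
    · subst h2
      have h1 : φ s ≤ boundaryFilter φ 0 := by
        have := hle 0 s hs
        rwa [zero_add] at this
      calc φ s ≤ boundaryFilter φ 0 := h1
        _ = sSup B := hbd
        _ ≤ _ := hsSup
    · have heq : φ s = Subgroup.closure {x : G | x ∈ X ∧ ω x = s₂} ⊔ boundaryFilter φ s₂ := by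
        rw [← hs₂]; exact hspan s₂ h2
      refine heq.le.trans (sup_le ?_ (hbd ▸ hsSup))
      refine (Subgroup.closure_le _).2 fun x hx => ?_
      refine Subgroup.subset_closure ⟨?_, hx.1⟩
      have h := (hmem x hx.1).1
      rw [hx.2] at h
      exact hs₂ ▸ h
  refine ⟨main, fun s => ?_⟩
  refine le_antisymm ((Subgroup.closure_le _).2 Set.inter_subset_left) ?_
  refine iSup₂_le fun t ht => ?_
  by_cases h0 : s + t = 0
  · -- then s ≤ 0 and t ≤ 0, so φ (s+t) = φ 0 = φ t with t ≠ 0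
    have htle : t ≤ 0 := by
      have := hadd 0 s t t (hmin s) le_rfl
      rw [zero_add, h0] at this
      exact this
    have hφt : φ (s + t) = φ t := by
      rw [h0]
      exact le_antisymm (hanti t 0 htle) (hanti 0 t (hmin t))
    rw [hφt, ← main t ht]
    refine Subgroup.closure_mono fun x hx => ⟨?_, hx.2⟩
    have : φ t ≤ boundaryFilter φ s := hφt ▸ hle s t ht
    exact this hx.1
  · rw [← main (s + t) h0]
    refine Subgroup.closure_mono fun x hx => ⟨?_, hx.2⟩
    exact hle s t ht hx.1
end

section
/- Let φ : M → 2^G be a filter with no inert subgroups such that every subgroup of ∂φ₀ is finitely generated. If 𝒴 is a graded basis for L(φ) and X ⊆ G is a preimage of 𝒴, then X contains a polycyclic generating sequence for ∂φ₀; consequently the map L(φ) → ∂φ₀ sending Σ_y k_y·y to the ordered product Π_y x_y^{k_y} is surjective. -/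
set_option linter.unusedSectionVars false

namespace Stmt18

open Subgroup
open scoped commutatorElement

variable {G M : Type*} [Group G] [AddCommMonoid M] [Preorder M]

/-! ### Basic lemmas about closures of lists -/

/-- closure of the elements of a list -/
def cls (l : List G) : Subgroup G := Subgroup.closure {x | x ∈ l}

lemma cls_nil : cls ([] : List G) = ⊥ := by
  have : {x : G | x ∈ ([] : List G)} = ∅ := by ext x; simp
  rw [cls, this, Subgroup.closure_empty]

lemma cls_append (l₁ l₂ : List G) : cls (l₁ ++ l₂) = cls l₁ ⊔ cls l₂ := by
  have : {x : G | x ∈ l₁ ++ l₂} = {x | x ∈ l₁} ∪ {x | x ∈ l₂} := by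
    ext x; simp [List.mem_append]
  rw [cls, this, Subgroup.closure_union]; rfl

lemma cls_cons (a : G) (l : List G) :
    cls (a :: l) = Subgroup.closure {a} ⊔ cls l := by
  have : {x : G | x ∈ a :: l} = {a} ∪ {x | x ∈ l} := by
    ext x; simp [List.mem_cons]
  rw [cls, this, Subgroup.closure_union]; rfl

lemma mem_cls_of_mem {l : List G} {x : G} (h : x ∈ l) : x ∈ cls l :=
  Subgroup.subset_closure h

lemma cls_mono {l₁ l₂ : List G} (h : l₁ ⊆ l₂) : cls l₁ ≤ cls l₂ :=
  Subgroup.closure_mono (fun _ hx => h hx)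

lemma cls_le {l : List G} {K : Subgroup G} (h : ∀ x ∈ l, x ∈ K) : cls l ≤ K :=
  (Subgroup.closure_le K).2 (fun _ hx => h _ hx)

/-- product of zipped powers lies in the closure -/
lemma zip_prod_mem (l : List G) (e : List ℤ) :
    (List.zipWith (fun (x : G) (k : ℤ) => x ^ k) l e).prod ∈ cls l := by
  apply Subgroup.list_prod_mem
  intro x hx
  induction l generalizing e with
  | nil => simp at hx
  | cons a l ih =>
      cases e with
      | nil => simp at hx
      | cons k e =>
          simp only [List.zipWith_cons_cons, List.mem_cons] at hx
          rcases hx with h | h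
          · subst h; exact zpow_mem (mem_cls_of_mem List.mem_cons_self) k
          · exact (cls_mono (List.subset_cons_self a l)) (ih e h)

/-! ### Normalizer lemmas -/

lemma conj_closure_le {S : Set G} {d : G}
    (h₁ : ∀ x ∈ S, d * x * d⁻¹ ∈ Subgroup.closure S) :
    ∀ g ∈ Subgroup.closure S, d * g * d⁻¹ ∈ Subgroup.closure S := by
  intro g hg
  induction hg using Subgroup.closure_induction with
  | mem x hx => exact h₁ x hx
  | one => simpa using (Subgroup.closure S).one_mem
  | mul x y hx hy px py =>
      have : d * (x * y) * d⁻¹ = (d * x * d⁻¹) * (d * y * d⁻¹) := by group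
      rw [this]; exact mul_mem px py
  | inv x hx px =>
      have : d * x⁻¹ * d⁻¹ = (d * x * d⁻¹)⁻¹ := by group
      rw [this]; exact inv_mem px

lemma mem_normalizer_of_gen {S : Set G} {d : G}
    (h₁ : ∀ x ∈ S, d * x * d⁻¹ ∈ Subgroup.closure S)
    (h₂ : ∀ x ∈ S, d⁻¹ * x * d ∈ Subgroup.closure S) :
    d ∈ Subgroup.normalizer (Subgroup.closure S : Set G) := by
  rw [Subgroup.mem_normalizer_iff]
  intro h
  constructor
  · exact fun hh => conj_closure_le h₁ h hh
  · intro hh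
    have h₂' : ∀ x ∈ S, d⁻¹ * x * d⁻¹⁻¹ ∈ Subgroup.closure S := by
      simpa using h₂
    have := conj_closure_le h₂' _ hh
    have e : d⁻¹ * (d * h * d⁻¹) * d⁻¹⁻¹ = h := by group
    rwa [e] at this

/-- `H` is normalized by `D = ∂φ₀` -/
def ND (φ : M → Subgroup G) (H : Subgroup G) : Prop :=
  boundaryFilter φ 0 ≤ Subgroup.normalizer (H : Set G)

lemma ND_of_normal (φ : M → Subgroup G) {H : Subgroup G} (h : H.Normal) :
    ND φ H := by
  have := Subgroup.normalizer_eq_top_iff.2 h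
  rw [ND, this]; exact le_top

lemma ND_conj {φ : M → Subgroup G} {H : Subgroup G} (hH : ND φ H)
    {d g : G} (hd : d ∈ boundaryFilter φ 0) (hg : g ∈ H) : d * g * d⁻¹ ∈ H :=
  (Subgroup.mem_normalizer_iff.1 (hH hd) g).1 hg

lemma ND_sup {φ : M → Subgroup G} {H K : Subgroup G} (hH : ND φ H)
    (hK : ND φ K) : ND φ (H ⊔ K) := by
  intro d hd
  have hsup : H ⊔ K = Subgroup.closure ((H : Set G) ∪ (K : Set G)) := by
    rw [Subgroup.closure_union, Subgroup.closure_eq, Subgroup.closure_eq]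
  rw [hsup]
  have hdH := hH hd
  have hdK := hK hd
  apply mem_normalizer_of_gen
  · rintro x (hx | hx)
    · exact Subgroup.subset_closure
        (Or.inl ((Subgroup.mem_normalizer_iff.1 hdH x).1 hx))
    · exact Subgroup.subset_closure
        (Or.inr ((Subgroup.mem_normalizer_iff.1 hdK x).1 hx))
  · rintro x (hx | hx)
    · have h3 := (Subgroup.mem_normalizer_iff.1 (inv_mem hdH) x).1 hx
      rw [inv_inv] at h3
      exact Subgroup.subset_closure (Or.inl h3)
    · have h3 := (Subgroup.mem_normalizer_iff.1 (inv_mem hdK) x).1 hx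
      rw [inv_inv] at h3
      exact Subgroup.subset_closure (Or.inr h3)

/-! ### Boundary filter lemmas -/

section Boundary

variable (φ : M → Subgroup G)

lemma phi_le_boundary {s t : M} (ht : t ≠ 0) : φ (s + t) ≤ boundaryFilter φ s :=
  le_biSup (fun t => φ (s + t)) ht

lemma boundary_normal (hnorm : ∀ s : M, (φ s).Normal) (s : M) :
    (boundaryFilter φ s).Normal := by
  constructor
  intro n hn g
  rw [boundaryFilter, iSup_subtype'] at hn
  refine Subgroup.iSup_induction _ (C := fun n => g * n * g⁻¹ ∈ boundaryFilter φ s) hn ?_ ?_ ?_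
  · intro t x hx
    exact phi_le_boundary φ t.2 ((hnorm (s + t.1)).conj_mem x hx g)
  · simpa using (boundaryFilter φ s).one_mem
  · intro x y hx hy
    have : g * (x * y) * g⁻¹ = (g * x * g⁻¹) * (g * y * g⁻¹) := by group
    rw [this]; exact mul_mem hx hy

variable (hadd : ∀ s t s' t' : M, s ≤ t → s' ≤ t' → s + s' ≤ t + t')
  (hmin : ∀ s : M, 0 ≤ s)
  (hanti : ∀ s t : M, s ≤ t → φ t ≤ φ s)

include hadd hmin hanti

lemma boundary_le_phi (s : M) : boundaryFilter φ s ≤ φ s := by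
  refine iSup₂_le fun t ht => ?_
  have h1 : s + 0 ≤ s + t := hadd s s 0 t le_rfl (hmin t)
  rw [add_zero] at h1
  exact hanti s (s + t) h1

lemma boundary_le_D (s : M) : boundaryFilter φ s ≤ boundaryFilter φ 0 := by
  refine iSup₂_le fun t ht => ?_
  have h1 : (0 : M) + t ≤ s + t := hadd 0 s t t (hmin s) le_rfl
  exact le_trans (hanti _ _ h1) (phi_le_boundary φ ht)

lemma phi_le_D {s : M} (hs : s ≠ 0) : φ s ≤ boundaryFilter φ 0 := by
  have := phi_le_boundary φ (s := 0) hs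
  rwa [zero_add] at this

end Boundary

/-! ### Commuting products -/

lemma commute_closure {a g : G} {S : Set G} (h : ∀ x ∈ S, Commute a x)
    (hg : g ∈ Subgroup.closure S) : Commute a g := by
  induction hg using Subgroup.closure_induction with
  | mem x hx => exact h x hx
  | one => exact Commute.one_right a
  | mul x y hx hy px py => exact px.mul_right py
  | inv x hx px => exact px.inv_right

lemma cls_comm_prod (l : List G) (hc : ∀ x ∈ l, ∀ y ∈ l, Commute x y) :
    ∀ g ∈ cls l, ∃ e : List ℤ, e.length = l.length ∧
      g = (List.zipWith (fun (x : G) (k : ℤ) => x ^ k) l e).prod := by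
  induction l with
  | nil =>
      intro g hg
      rw [cls_nil, Subgroup.mem_bot] at hg
      exact ⟨[], rfl, by simp [hg]⟩
  | cons a l ih =>
      intro g hg
      have key : ∀ h ∈ cls (a :: l), ∃ (k : ℤ) (u : G), u ∈ cls l ∧ h = a ^ k * u := by
        intro h hh
        induction hh using Subgroup.closure_induction with
        | mem x hx =>
            rcases (List.mem_cons.1 hx) with h | h
            · exact ⟨1, 1, one_mem _, by simp [h]⟩
            · exact ⟨0, x, mem_cls_of_mem h, by simp⟩
        | one => exact ⟨0, 1, one_mem _, by simp⟩
        | mul x y hx hy px py =>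
            obtain ⟨k, u, hu, rfl⟩ := px
            obtain ⟨j, v, hv, rfl⟩ := py
            have hau : Commute a u := by
              refine commute_closure (fun z hz => hc a List.mem_cons_self z
                (List.mem_cons_of_mem a hz)) hu
            have huj : u * a ^ j = a ^ j * u := ((hau.zpow_left j).symm).eq
            refine ⟨k + j, u * v, mul_mem hu hv, ?_⟩
            calc a ^ k * u * (a ^ j * v) = a ^ k * (u * a ^ j) * v := by group
              _ = a ^ k * (a ^ j * u) * v := by rw [huj]
              _ = a ^ (k + j) * (u * v) := by rw [zpow_add]; group
        | inv x hx px =>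
            obtain ⟨k, u, hu, rfl⟩ := px
            have hau : Commute a u := by
              refine commute_closure (fun z hz => hc a List.mem_cons_self z
                (List.mem_cons_of_mem a hz)) hu
            have h1 : u⁻¹ * a ^ (-k) = a ^ (-k) * u⁻¹ := ((hau.zpow_left (-k)).inv_right.symm).eq
            refine ⟨-k, u⁻¹, inv_mem hu, ?_⟩
            calc (a ^ k * u)⁻¹ = u⁻¹ * (a ^ k)⁻¹ := by rw [mul_inv_rev]
              _ = u⁻¹ * a ^ (-k) := by rw [zpow_neg]
              _ = a ^ (-k) * u⁻¹ := h1
      obtain ⟨k, u, hu, rfl⟩ := key g hg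
      obtain ⟨e, hel, he⟩ := ih (fun x hx y hy => hc x (List.mem_cons_of_mem a hx) y
        (List.mem_cons_of_mem a hy)) u hu
      exact ⟨k :: e, by simp [hel], by simp [he]⟩

/-- elements generating `cls l` pairwise commute mod `N`; ordered-product decomposition -/
lemma abmodN (l : List G) (N : Subgroup G) (hN : N.Normal)
    (hc : ∀ x ∈ l, ∀ y ∈ l, ⁅x, y⁆ ∈ N) :
    ∀ w ∈ cls l, ∃ e : List ℤ, e.length = l.length ∧
      (List.zipWith (fun (x : G) (k : ℤ) => x ^ k) l e).prod⁻¹ * w ∈ N := by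
  haveI := hN
  intro w hw
  set π := QuotientGroup.mk' N with hπ
  have hker : ∀ z : G, π z = 1 ↔ z ∈ N := by
    intro z
    rw [← MonoidHom.mem_ker, QuotientGroup.ker_mk']
  have hcomm : ∀ x ∈ l.map π, ∀ y ∈ l.map π, Commute x y := by
    rintro x hx y hy
    obtain ⟨x', hx', rfl⟩ := List.mem_map.1 hx
    obtain ⟨y', hy', rfl⟩ := List.mem_map.1 hy
    rw [← commutatorElement_eq_one_iff_commute, ← map_commutatorElement]
    exact (hker _).2 (hc x' hx' y' hy')
  have hπw : π w ∈ cls (l.map π) := by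
    have h1 : π w ∈ Subgroup.map π (cls l) := Subgroup.mem_map_of_mem π hw
    rw [cls, MonoidHom.map_closure] at h1
    have h2 : π '' {x | x ∈ l} = {x | x ∈ l.map π} := by
      ext x; simp [List.mem_map]
    rwa [h2] at h1
  obtain ⟨e, hel, he⟩ := cls_comm_prod (l.map π) hcomm (π w) hπw
  refine ⟨e, by rw [List.length_map] at hel; exact hel, ?_⟩
  rw [← hker _]
  have hz : List.zipWith (fun (x : G ⧸ N) (k : ℤ) => x ^ k) (l.map π) e
      = List.map π (List.zipWith (fun (x : G) (k : ℤ) => x ^ k) l e) := by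
    rw [List.zipWith_map_left, List.map_zipWith]
    simp only [map_zpow]
  rw [hz] at he
  rw [map_mul, map_inv, he, ← map_list_prod]
  simp

/-- decomposition in a join with a normal subgroup -/
lemma sup_decomp (H N : Subgroup G) (hN : N.Normal) {g : G} (hg : g ∈ H ⊔ N) :
    ∃ h ∈ H, ∃ n ∈ N, g = h * n := by
  haveI := hN
  have h1 : g ∈ (↑(H ⊔ N) : Set G) := hg
  rw [Subgroup.mul_normal H N] at h1
  obtain ⟨h, hh, n, hn, he⟩ := Set.mem_mul.1 h1
  exact ⟨h, hh, n, hn, he.symm⟩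

/-! ### Good lists -/

/-- ordered product property -/
def PP (l : List G) : Prop :=
  ∀ g ∈ cls l, ∃ e : List ℤ, e.length = l.length ∧
    g = (List.zipWith (fun (x : G) (k : ℤ) => x ^ k) l e).prod

/-- a good list: entries from `X`, tails normalized by `D`, product property for tails -/
def Good (φ : M → Subgroup G) (X : Set G) : List G → Prop
  | [] => True
  | a :: l => Good φ X l ∧ a ∈ X ∧ ND φ (cls (a :: l)) ∧ PP (a :: l)

variable {φ : M → Subgroup G} {X : Set G}

lemma good_nil : Good φ X ([] : List G) := trivial

lemma good_PP {l : List G} (h : Good φ X l) : PP l := by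
  cases l with
  | nil =>
      intro g hg
      rw [cls_nil, Subgroup.mem_bot] at hg
      exact ⟨[], rfl, by simp [hg]⟩
  | cons a l => exact h.2.2.2

lemma good_ND {l : List G} (h : Good φ X l) : ND φ (cls l) := by
  cases l with
  | nil => rw [cls_nil]; exact ND_of_normal φ inferInstance
  | cons a l => exact h.2.2.1

lemma good_sub_X {l : List G} (h : Good φ X l) : ∀ x ∈ l, x ∈ X := by
  induction l with
  | nil => simp
  | cons a l ih =>
      intro x hx
      rcases List.mem_cons.1 hx with h' | h'
      · subst h'; exact h.2.1
      · exact ih h.1 x h'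

lemma good_drop {l : List G} (h : Good φ X l) : ∀ k, Good φ X (l.drop k) := by
  induction l with
  | nil => intro k; simp [good_nil]
  | cons a l ih =>
      intro k
      cases k with
      | zero => exact h
      | succ k => rw [List.drop_succ_cons]; exact ih h.1 k

/-- concatenation of good lists, second one generating a normal subgroup -/
lemma good_append {l₁ l₂ : List G} (h₁ : Good φ X l₁) (h₂ : Good φ X l₂)
    (hN : (cls l₂).Normal) : Good φ X (l₁ ++ l₂) := by
  induction l₁ with
  | nil => simpa using h₂
  | cons a l₁ ih =>
      rw [List.cons_append]
      have hcls : cls (a :: (l₁ ++ l₂)) = cls (a :: l₁) ⊔ cls l₂ := by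
        rw [show a :: (l₁ ++ l₂) = (a :: l₁) ++ l₂ from rfl, cls_append]
      refine ⟨ih h₁.1, h₁.2.1, ?_, ?_⟩
      · rw [hcls]
        exact ND_sup h₁.2.2.1 (ND_of_normal φ hN)
      · intro g hg
        rw [hcls] at hg
        obtain ⟨h, hh, n, hn, rfl⟩ := sup_decomp _ _ hN hg
        obtain ⟨e, hel, he⟩ := h₁.2.2.2 h hh
        obtain ⟨f, hfl, hf⟩ := good_PP h₂ n hn
        refine ⟨e ++ f, ?_, ?_⟩
        · simp only [List.length_append, List.length_cons] at *
          omega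
        · rw [show a :: (l₁ ++ l₂) = (a :: l₁) ++ l₂ from rfl,
            List.zipWith_append (l₁ := a :: l₁) (l₂ := e) (by omega), List.prod_append, ← he, ← hf]


/-! ### The weight-block lemma -/

lemma ND_of_phi_le {K : Subgroup G} (φ : M → Subgroup G)
    (h : ∀ t : M, t ≠ 0 → φ t ≤ Subgroup.normalizer (K : Set G)) : ND φ K := by
  unfold ND boundaryFilter
  refine iSup₂_le fun t ht => ?_
  rw [zero_add]
  exact h t ht

lemma good_block (hnorm : ∀ s : M, (φ s).Normal)
    (hcomm : ∀ s t : M, ⁅φ s, φ t⁆ ≤ φ (s + t))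
    {s : M} (hs : s ≠ 0) {l₂ : List G}
    (h₂ : Good φ X l₂) (hcl₂ : cls l₂ = boundaryFilter φ s) :
    ∀ m : List G, (∀ x ∈ m, x ∈ X ∧ x ∈ φ s) → Good φ X (m ++ l₂) := by
  intro m
  induction m with
  | nil => intro _; simpa using h₂
  | cons a m ih =>
      intro hm
      set bd := boundaryFilter φ s with hbd
      have hbdn : bd.Normal := boundary_normal φ hnorm s
      have hKeq : cls (a :: (m ++ l₂)) = cls (a :: m) ⊔ bd := by
        rw [show a :: (m ++ l₂) = (a :: m) ++ l₂ from rfl, cls_append, hcl₂]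
      have hKS : Subgroup.closure ({x : G | x ∈ a :: m} ∪ (bd : Set G))
          = cls (a :: m) ⊔ bd := by
        rw [Subgroup.closure_union, Subgroup.closure_eq]; rfl
      rw [List.cons_append]
      refine ⟨ih (fun x hx => hm x (List.mem_cons_of_mem a hx)), (hm a List.mem_cons_self).1, ?_, ?_⟩
      · -- normalized by D
        refine ND_of_phi_le φ fun t ht => ?_
        intro d hd
        rw [hKeq, ← hKS]
        have key : ∀ d' ∈ φ t, ∀ x ∈ ({x : G | x ∈ a :: m} ∪ (bd : Set G)),
            d' * x * d'⁻¹ ∈ Subgroup.closure ({x : G | x ∈ a :: m} ∪ (bd : Set G)) := by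
          rintro d' hd' x (hx | hx)
          · have hxφ : x ∈ φ s := (hm x hx).2
            have hcm : ⁅d', x⁆ ∈ φ (t + s) := hcomm t s (Subgroup.commutator_mem_commutator hd' hxφ)
            rw [add_comm] at hcm
            have hcb : ⁅d', x⁆ ∈ bd := phi_le_boundary φ ht hcm
            have he : d' * x * d'⁻¹ = ⁅d', x⁆ * x := by
              rw [commutatorElement_def]; group
            rw [he]
            exact mul_mem (Subgroup.subset_closure (Or.inr hcb))
              (Subgroup.subset_closure (Or.inl hx))
          · exact Subgroup.subset_closure (Or.inr (hbdn.conj_mem x hx d'))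
        refine mem_normalizer_of_gen (key d hd) ?_
        intro x hx
        have h6 := key d⁻¹ (inv_mem hd) x hx
        rwa [inv_inv] at h6
      · -- product property
        intro g hg
        rw [hKeq] at hg
        obtain ⟨w, hw, b, hb, rfl⟩ := sup_decomp _ _ hbdn hg
        have hcms : ∀ x ∈ a :: m, ∀ y ∈ a :: m, ⁅x, y⁆ ∈ bd := by
          intro x hx y hy
          have : ⁅x, y⁆ ∈ φ (s + s) := hcomm s s
            (Subgroup.commutator_mem_commutator (hm x hx).2 (hm y hy).2)
          exact phi_le_boundary φ hs this
        obtain ⟨e, hel, heb⟩ := abmodN (a :: m) bd hbdn hcms w hw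
        have hbb : (List.zipWith (fun (x : G) (k : ℤ) => x ^ k) (a :: m) e).prod⁻¹ * w * b ∈ bd :=
          mul_mem heb hb
        rw [← hcl₂] at hbb
        obtain ⟨f, hfl, hf⟩ := good_PP h₂ _ hbb
        refine ⟨e ++ f, ?_, ?_⟩
        · simp only [List.length_append, List.length_cons] at *
          omega
        · rw [show a :: (m ++ l₂) = (a :: m) ++ l₂ from rfl,
            List.zipWith_append (l₁ := a :: m) (l₂ := e) (by omega), List.prod_append, ← hf]
          group

/-! ### Compactness: finitely generated subgroups need only finite sub-suprema -/

lemma fg_le_sup_finset {H : Subgroup G} (hH : H.FG) {ι : Type*}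
    (f : ι → Subgroup G) (N : Subgroup G)
    (hle : H ≤ (⨆ i, f i) ⊔ N) : ∃ t : Finset ι, H ≤ (⨆ i ∈ t, f i) ⊔ N := by
  classical
  obtain ⟨S, hScl, hSfin⟩ := (Subgroup.fg_iff H).1 hH
  set g : Finset ι → Subgroup G := fun t => (⨆ i ∈ t, f i) ⊔ N with hg
  have hmono : Monotone g := by
    intro t t' htt
    exact sup_le_sup (biSup_mono (fun i hi => htt hi)) le_rfl
  have hdir : Directed (· ≤ ·) g := hmono.directed_le
  have hsup : (⨆ i, f i) ⊔ N ≤ ⨆ t, g t := by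
    refine sup_le ?_ ?_
    · refine iSup_le fun i => ?_
      refine le_trans ?_ (le_iSup g {i})
      exact le_trans (le_iSup₂ (f := fun j (_ : j ∈ ({i} : Finset ι)) => f j) i
        (Finset.mem_singleton_self i)) le_sup_left
    · exact le_trans le_sup_right (le_iSup g ∅)
  have hmem : ∀ x ∈ S, ∃ t, x ∈ g t := by
    intro x hx
    have : x ∈ ⨆ t, g t := hsup (hle (hScl ▸ Subgroup.subset_closure hx))
    exact (Subgroup.mem_iSup_of_directed hdir).1 this
  choose! c hc using hmem
  refine ⟨hSfin.toFinset.sup c, ?_⟩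
  rw [← hScl]
  refine (Subgroup.closure_le _).2 fun x hx => ?_
  exact hmono (Finset.le_sup (hSfin.mem_toFinset.2 hx)) (hc x hx)

lemma finset_sup_normal {ι : Type*} (t : Finset ι) (f : ι → Subgroup G) :
    (∀ i ∈ t, (f i).Normal) → (⨆ i ∈ t, f i).Normal := by
  classical
  induction t using Finset.induction_on with
  | empty =>
      intro _
      have : (⨆ i ∈ (∅ : Finset ι), f i) = ⊥ := by simp
      rw [this]; infer_instance
  | @insert a s ha ih =>
      intro hf
      rw [Finset.iSup_insert]
      haveI h1 := hf a (Finset.mem_insert_self a s)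
      haveI h2 := ih (fun i hi => hf i (Finset.mem_insert_of_mem hi))
      exact Subgroup.sup_normal _ _

lemma good_finset_sup {ι : Type*} (t : Finset ι) (f : ι → Subgroup G) :
    (∀ i ∈ t, (f i).Normal ∧ ∃ l, Good φ X l ∧ cls l = f i) →
    ∃ l, Good φ X l ∧ cls l = ⨆ i ∈ t, f i := by
  classical
  induction t using Finset.induction_on with
  | empty =>
      intro _
      refine ⟨[], good_nil, ?_⟩
      rw [cls_nil]; simp
  | @insert a s ha ih =>
      intro hf
      obtain ⟨l₂, h₂, hcl₂⟩ := ih (fun i hi => hf i (Finset.mem_insert_of_mem hi))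
      obtain ⟨hNa, la, hga, hcla⟩ := hf a (Finset.mem_insert_self a s)
      refine ⟨la ++ l₂, good_append hga h₂ ?_, ?_⟩
      · rw [hcl₂]
        exact finset_sup_normal s f (fun i hi => (hf i (Finset.mem_insert_of_mem hi)).1)
      · rw [cls_append, hcla, hcl₂, Finset.iSup_insert]

lemma BBn_normal (hnorm : ∀ s : M, (φ s).Normal) :
    ∀ n : ℕ, ∀ H ∈ BBn φ n, H.Normal := by
  intro n
  induction n with
  | zero =>
      intro H hH
      simp only [BBn, Set.mem_singleton_iff] at hH
      subst hH; infer_instance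
  | succ n ih =>
      intro H hH
      simp only [BBn, Set.mem_union, Set.mem_setOf_eq] at hH
      rcases hH with h | ⟨s, hφs, -⟩
      · exact ih H h
      · exact hφs ▸ hnorm s

section Main

variable (hadd : ∀ s t s' t' : M, s ≤ t → s' ≤ t' → s + s' ≤ t + t')
  (hmin : ∀ s : M, 0 ≤ s)
  (hnorm : ∀ s : M, (φ s).Normal)
  (hcomm : ∀ s t : M, ⁅φ s, φ t⁆ ≤ φ (s + t))
  (hanti : ∀ s t : M, s ≤ t → φ t ≤ φ s)
  (hfg : ∀ H : Subgroup G, H ≤ boundaryFilter φ 0 → H.FG)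
  (ω : G → M)
  (hmem : ∀ x ∈ X, x ∈ φ (ω x) ∧ x ∉ boundaryFilter φ (ω x))
  (hspan : ∀ s : M, s ≠ 0 →
    φ s = Subgroup.closure {x : G | x ∈ X ∧ ω x = s} ⊔ boundaryFilter φ s)

include hadd hmin hnorm hcomm hanti hmem hspan in
lemma good_phi {s : M} (hs : s ≠ 0) (hφfg : (φ s).FG)
    {l₂ : List G} (h₂ : Good φ X l₂) (hcl₂ : cls l₂ = boundaryFilter φ s) :
    ∃ l, Good φ X l ∧ cls l = φ s := by
  set Xs := {x : G | x ∈ X ∧ ω x = s} with hXsdef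
  have hsp := hspan s hs
  have hXs : Subgroup.closure Xs = ⨆ x : Xs, Subgroup.closure {(x : G)} := by
    apply le_antisymm
    · refine (Subgroup.closure_le _).2 fun x hx => ?_
      exact (le_iSup (fun x : Xs => Subgroup.closure {(x : G)}) ⟨x, hx⟩)
        (Subgroup.subset_closure rfl)
    · exact iSup_le fun x => Subgroup.closure_mono (Set.singleton_subset_iff.2 x.2)
  have hle : φ s ≤ (⨆ x : Xs, Subgroup.closure {(x : G)}) ⊔ boundaryFilter φ s := by
    rw [← hXs, ← hsp]
  obtain ⟨t, ht⟩ := fg_le_sup_finset hφfg _ _ hle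
  have hmm : ∀ y ∈ t.toList.map (Subtype.val : ↥Xs → G), y ∈ X ∧ y ∈ φ s := by
    intro y hy
    obtain ⟨x, hxt, rfl⟩ := List.mem_map.1 hy
    have hx : x.val ∈ X ∧ ω x.val = s := x.2
    refine ⟨hx.1, ?_⟩
    have h5 := (hmem x.1 hx.1).1
    rwa [hx.2] at h5
  set m : List G := t.toList.map (Subtype.val : ↥Xs → G) with hmdef
  have hgood := good_block hnorm hcomm hs h₂ hcl₂ m hmm
  refine ⟨m ++ l₂, hgood, ?_⟩
  rw [cls_append, hcl₂]
  apply le_antisymm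
  · exact sup_le (cls_le fun y hy => (hmm y hy).2) (boundary_le_phi φ hadd hmin hanti s)
  · refine le_trans ht (sup_le ?_ le_sup_right)
    refine iSup₂_le fun x hx => ?_
    refine le_trans ?_ le_sup_left
    refine Subgroup.closure_mono ?_
    intro y hy
    rcases hy with rfl
    exact List.mem_map_of_mem (Finset.mem_toList.2 hx)

include hadd hmin hnorm hcomm hanti hfg hmem hspan in
lemma good_of_BBn : ∀ n : ℕ, ∀ H ∈ BBn φ n, H ≤ boundaryFilter φ 0 →
    ∃ l, Good φ X l ∧ cls l = H := by
  intro n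
  induction n with
  | zero =>
      intro H hH _
      simp only [BBn, Set.mem_singleton_iff] at hH
      subst hH
      exact ⟨[], good_nil, by rw [cls_nil]⟩
  | succ n ih =>
      intro H hH hle
      simp only [BBn, Set.mem_union, Set.mem_setOf_eq] at hH
      rcases hH with h | ⟨s, hφs, B, hB, hbd⟩
      · exact ih H h hle
      · have hbdD : boundaryFilter φ s ≤ boundaryFilter φ 0 :=
          boundary_le_D φ hadd hmin hanti s
        have hbfg : (boundaryFilter φ s).FG := hfg _ hbdD
        have hle2 : boundaryFilter φ s ≤ (⨆ K : B, (K : Subgroup G)) ⊔ ⊥ := by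
          rw [sup_bot_eq, ← sSup_eq_iSup' B]
          exact le_of_eq hbd
        obtain ⟨t, ht⟩ := fg_le_sup_finset hbfg _ _ hle2
        have hgood : ∀ K : B, K ∈ t → ((K : Subgroup G)).Normal ∧
            ∃ l, Good φ X l ∧ cls l = (K : Subgroup G) := by
          intro K _
          have hKB : (K : Subgroup G) ∈ BBn φ n := hB K.2
          refine ⟨BBn_normal hnorm n _ hKB, ?_⟩
          refine ih _ hKB ?_
          exact le_trans (le_sSup K.2) (le_trans (le_of_eq hbd.symm) hbdD)
        obtain ⟨l₂, h₂, hcl₂⟩ := good_finset_sup t _ hgood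
        have hcl₂' : cls l₂ = boundaryFilter φ s := by
          apply le_antisymm
          · rw [hcl₂]
            refine iSup₂_le fun K _ => ?_
            rw [hbd]
            exact le_sSup K.2
          · refine le_trans ht ?_
            rw [sup_bot_eq, ← hcl₂]
        by_cases hs : s = 0
        · subst hs
          refine ⟨l₂, h₂, ?_⟩
          rw [hcl₂']
          refine le_antisymm ?_ hle
          exact le_trans (boundary_le_phi φ hadd hmin hanti 0) (le_of_eq hφs)
        · have hφfg : (φ s).FG := by
            refine hfg _ ?_
            rw [hφs]; exact hle
          obtain ⟨l, hgoodl, hcll⟩ :=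
            good_phi hadd hmin hnorm hcomm hanti ω hmem hspan hs hφfg h₂ hcl₂'
          exact ⟨l, hgoodl, by rw [hcll, hφs]⟩

include hadd hmin hnorm hcomm hanti hfg hmem hspan in
lemma good_D (hnoinert : ∀ s : M, φ s ∈ BBall φ) :
    ∃ l, Good φ X l ∧ cls l = boundaryFilter φ 0 := by
  obtain ⟨s', hφs', B, hB, hbd⟩ := hnoinert 0
  have hbdD : boundaryFilter φ s' ≤ boundaryFilter φ 0 :=
    boundary_le_D φ hadd hmin hanti s'
  have hbfg : (boundaryFilter φ s').FG := hfg _ hbdD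
  have hle2 : boundaryFilter φ s' ≤ (⨆ K : B, (K : Subgroup G)) ⊔ ⊥ := by
    rw [sup_bot_eq, ← sSup_eq_iSup' B]
    exact le_of_eq hbd
  obtain ⟨t, ht⟩ := fg_le_sup_finset hbfg _ _ hle2
  have hgood : ∀ K : B, K ∈ t → ((K : Subgroup G)).Normal ∧
      ∃ l, Good φ X l ∧ cls l = (K : Subgroup G) := by
    intro K _
    obtain ⟨n, hKU⟩ := Set.mem_iUnion.1 (hB K.2)
    refine ⟨BBn_normal hnorm n _ hKU, ?_⟩
    refine good_of_BBn hadd hmin hnorm hcomm hanti hfg ω hmem hspan n _ hKU ?_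
    exact le_trans (le_sSup K.2) (le_trans (le_of_eq hbd.symm) hbdD)
  obtain ⟨l₂, h₂, hcl₂⟩ := good_finset_sup t _ hgood
  have hcl₂' : cls l₂ = boundaryFilter φ s' := by
    apply le_antisymm
    · rw [hcl₂]
      refine iSup₂_le fun K _ => ?_
      rw [hbd]
      exact le_sSup K.2
    · refine le_trans ht ?_
      rw [sup_bot_eq, ← hcl₂]
  by_cases hs : s' = 0
  · subst hs
    exact ⟨l₂, h₂, hcl₂'⟩
  · have hφD : φ s' ≤ boundaryFilter φ 0 := phi_le_D φ hadd hmin hanti hs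
    have hφfg : (φ s').FG := hfg _ hφD
    obtain ⟨l, hgoodl, hcll⟩ :=
      good_phi hadd hmin hnorm hcomm hanti ω hmem hspan hs hφfg h₂ hcl₂'
    refine ⟨l, hgoodl, ?_⟩
    rw [hcll]
    refine le_antisymm hφD ?_
    rw [hφs']
    exact boundary_le_phi φ hadd hmin hanti 0

end Main

/-! ### Strictness cleanup -/

lemma good_strict {l : List G} (h : Good φ X l) :
    ∃ l', Good φ X l' ∧ cls l' = cls l ∧
      ∀ k, k + 1 ≤ l'.length → cls (l'.drop (k + 1)) < cls (l'.drop k) := by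
  induction l with
  | nil =>
      refine ⟨[], good_nil, rfl, ?_⟩
      intro k hk; simp at hk
  | cons a l ih =>
      obtain ⟨l'', hg'', hc'', hs''⟩ := ih h.1
      by_cases ha : a ∈ cls l
      · have hone : cls (a :: l) = cls l := by
          apply le_antisymm
          · refine cls_le fun x hx => ?_
            rcases List.mem_cons.1 hx with h' | h'
            · subst h'; exact ha
            · exact mem_cls_of_mem h'
          · exact cls_mono (List.subset_cons_self a l)
        exact ⟨l'', hg'', by rw [hc'', hone], hs''⟩
      · have hacl : cls (a :: l'') = cls (a :: l) := by
          rw [cls_cons, cls_cons, hc'']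
        refine ⟨a :: l'', ⟨hg'', h.2.1, ?_, ?_⟩, ?_, ?_⟩
        · rw [hacl]; exact h.2.2.1
        · intro g hg
          rw [hacl] at hg
          obtain ⟨e, hel, he⟩ := h.2.2.2 g hg
          cases e with
          | nil => simp at hel
          | cons e₀ e' =>
              have hw : (List.zipWith (fun (x : G) (k : ℤ) => x ^ k) l e').prod ∈ cls l'' := by
                rw [hc'']; exact zip_prod_mem l e'
              obtain ⟨f, hfl, hf⟩ := good_PP hg'' _ hw
              refine ⟨e₀ :: f, by simp [hfl], ?_⟩
              rw [he]
              simp only [List.zipWith_cons_cons, List.prod_cons]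
              rw [← hf]
        · rw [cls_cons, cls_cons, hc'']
        · intro k hk
          cases k with
          | zero =>
              have h1 : (a :: l'').drop 1 = l'' := rfl
              have h0 : (a :: l'').drop 0 = a :: l'' := rfl
              rw [h1, h0]
              refine lt_of_le_of_ne (cls_mono (List.subset_cons_self a l'')) ?_
              intro heq
              apply ha
              rw [← hc'', heq]
              exact mem_cls_of_mem List.mem_cons_self
          | succ k =>
              rw [List.drop_succ_cons, List.drop_succ_cons]
              refine hs'' k ?_
              simp only [List.length_cons] at hk
              omega

/-! ### List index lemmas for the final conversion -/

lemma drop_set_eq (l : List G) (i : ℕ) :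
    {x : G | ∃ j : Fin l.length, i ≤ (j : ℕ) ∧ l.get j = x} = {x | x ∈ l.drop i} := by
  ext x
  simp only [Set.mem_setOf_eq]
  constructor
  · rintro ⟨j, hij, rfl⟩
    have hj : (j : ℕ) - i < (l.drop i).length := by
      rw [List.length_drop]; omega
    refine List.mem_iff_getElem.2 ⟨(j : ℕ) - i, hj, ?_⟩
    rw [List.getElem_drop, List.get_eq_getElem]
    congr 1
    omega
  · intro hx
    obtain ⟨k, hk, he⟩ := List.mem_iff_getElem.1 hx
    have hk' : k < l.length - i := by rwa [List.length_drop] at hk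
    refine ⟨⟨i + k, by omega⟩, by simp, ?_⟩
    rw [List.get_eq_getElem]
    rw [List.getElem_drop] at he
    exact he

lemma ofFn_zip (l : List G) (e : List ℤ) (h : e.length = l.length) :
    List.ofFn (fun i : Fin l.length => l.get i ^ e.get (Fin.cast h.symm i)) =
      List.zipWith (fun (x : G) (k : ℤ) => x ^ k) l e := by
  apply List.ext_getElem
  · simp only [List.length_ofFn, List.length_zipWith]
    omega
  · intro n h₁ h₂
    rw [List.getElem_ofFn, List.getElem_zipWith]
    simp [List.get_eq_getElem]

end Stmt18

/-- if `φ` has no inert subgroups, every subgroup of `∂φ₀` is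
finitely generated, and `X` is a preimage of a graded basis of `L(φ)`, then
`X` contains a polycyclic generating sequence `(a₁, …, a_n)` for `∂φ₀`, and
consequently the map `L(φ) → ∂φ₀`, `Σ k_y·y ↦ Π x_y^{k_y}`, is surjective. -/
theorem graded_basis_preimage_contains_pcgs {G M : Type*} [Group G]
    [AddCommMonoid M] [Preorder M]
    (hadd : ∀ s t s' t' : M, s ≤ t → s' ≤ t' → s + s' ≤ t + t')
    (hmin : ∀ s : M, 0 ≤ s)
    (φ : M → Subgroup G)
    (hnorm : ∀ s : M, (φ s).Normal)
    (hcomm : ∀ s t : M, ⁅φ s, φ t⁆ ≤ φ (s + t))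
    (hanti : ∀ s t : M, s ≤ t → φ t ≤ φ s)
    (hnoinert : ∀ s : M, φ s ∈ BBall φ)
    -- every subgroup of ∂φ₀ is finitely generated
    (hfg : ∀ H : Subgroup G, H ≤ boundaryFilter φ 0 → H.FG)
    -- X is a preimage of a graded basis 𝒴 of L(φ)
    (X : Set G) (ω : G → M)
    (hω0 : ∀ x ∈ X, ω x ≠ 0)
    (hmem : ∀ x ∈ X, x ∈ φ (ω x) ∧ x ∉ boundaryFilter φ (ω x))
    (hspan : ∀ s : M, s ≠ 0 →
      φ s = Subgroup.closure {x : G | x ∈ X ∧ ω x = s} ⊔ boundaryFilter φ s)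
    (hindep : ∀ x ∈ X,
      x ∉ Subgroup.closure {y : G | y ∈ X ∧ ω y = ω x ∧ y ≠ x} ⊔ boundaryFilter φ (ω x)) :
    ∃ (n : ℕ) (a : Fin n → G) (Gi : ℕ → Subgroup G),
      (∀ i : Fin n, a i ∈ X) ∧
      -- G_i = ⟨a_i, …, a_n⟩ is a polycyclic series for ∂φ₀
      (∀ i : ℕ, Gi i = Subgroup.closure {x : G | ∃ j : Fin n, i ≤ (j : ℕ) ∧ a j = x}) ∧
      Gi 0 = boundaryFilter φ 0 ∧
      (∀ i < n, Gi (i + 1) < Gi i) ∧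
      (∀ i < n, ∀ x ∈ Gi i, ∀ y ∈ Gi (i + 1), x * y * x⁻¹ ∈ Gi (i + 1)) ∧
      -- the induced map L(φ) → ∂φ₀ is surjective: every element of ∂φ₀ is an
      -- ordered product of powers of the preimages
      (∀ g ∈ boundaryFilter φ 0, ∃ e : Fin n → ℤ,
        g = (List.ofFn fun i : Fin n => a i ^ e i).prod) := by
  classical
  obtain ⟨l₀, hg₀, hcl₀⟩ :=
    Stmt18.good_D hadd hmin hnorm hcomm hanti hfg ω hmem hspan hnoinert
  obtain ⟨l, hgl, hclEq, hstrict⟩ := Stmt18.good_strict hg₀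
  have hclD : Stmt18.cls l = boundaryFilter φ 0 := by rw [hclEq, hcl₀]
  have hGi : ∀ i : ℕ,
      Subgroup.closure {x : G | ∃ j : Fin l.length, i ≤ (j : ℕ) ∧ l.get j = x}
        = Stmt18.cls (l.drop i) := by
    intro i
    rw [Stmt18.drop_set_eq]
    rfl
  refine ⟨l.length, l.get,
    fun i => Subgroup.closure {x : G | ∃ j : Fin l.length, i ≤ (j : ℕ) ∧ l.get j = x},
    ?_, fun i => rfl, ?_, ?_, ?_, ?_⟩
  · exact fun i => Stmt18.good_sub_X hgl _ (List.get_mem l i)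
  · simp only [hGi, List.drop_zero]
    exact hclD
  · intro i hi
    simp only [hGi]
    exact hstrict i hi
  · intro i hi x hx y hy
    simp only [hGi] at hx hy ⊢
    have hxD : x ∈ boundaryFilter φ 0 := by
      rw [← hclD]
      exact Stmt18.cls_mono (List.drop_subset i l) hx
    exact Stmt18.ND_conj (Stmt18.good_ND (Stmt18.good_drop hgl (i + 1))) hxD hy
  · intro g hg
    have hgcl : g ∈ Stmt18.cls l := by rw [hclD]; exact hg
    obtain ⟨e, hel, he⟩ := Stmt18.good_PP hgl g hgcl
    refine ⟨fun i => e.get (Fin.cast hel.symm i), ?_⟩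
    rw [Stmt18.ofFn_zip l e hel]
    exact he
end
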